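/- For any Dice type τ and any values v, v_x : τ, the syntactic identity (v ⇔τ v_x) = (form_τ(x) ⇔τ v)[x ↦τ v_x] holds: the pointwise iff of the two values equals the result of typed substitution of v_x for x in the pointwise iff of the form of x with v. -/

import Mathlib

/-- Dice types: `τ ::= Bool | τ1 × τ2`. -/
inductive Ty : Type
  | bool : Ty
  | prod : Ty → Ty → Ty

/-- Dice values: `v ::= true | false | (v, v)`. -/
inductive Val : Type
  | bool : Bool → Val
  | pair : Val → Val → Val

/-- Typing of values. -/
def Val.hasTy : Val → Ty → Bool
  | .bool _, .bool => true
  | .pair v1 v2, .prod τ1 τ2 => v1.hasTy τ1 && v2.hasTy τ2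
  | _, _ => false

/-- Variables: a base program-variable name together with a path of
left/right projections (`false` = left, `true` = right).  The derived names
`x_l` and `x_r` of the form function are modeled by extending the path, which
guarantees they are distinct and fresh. -/
abbrev Var : Type := String × List Bool

/-- Propositional formulas over a set of variables `V`. -/
inductive Form (V : Type) : Type
  | tt : Form V
  | ff : Form V
  | var : V → Form V
  | not : Form V → Form V
  | and : Form V → Form V → Form V
  | or : Form V → Form V → Form V
  | iff : Form V → Form V → Form V

/-- Evaluation of a formula under a truth assignment. -/
def Form.eval {V : Type} : Form V → (V → Bool) → Bool
  | .tt, _ => true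
  | .ff, _ => false
  | .var x, σ => σ x
  | .not φ, σ => !(φ.eval σ)
  | .and φ ψ, σ => φ.eval σ && ψ.eval σ
  | .or φ ψ, σ => φ.eval σ || ψ.eval σ
  | .iff φ ψ, σ => φ.eval σ == ψ.eval σ

/-- Tuples of Boolean formulas, shaped like a Dice type. -/
inductive TForm (V : Type) : Type
  | base : Form V → TForm V
  | pair : TForm V → TForm V → TForm V

/-- The form function: `form_Bool(x) = x` and
`form_{τ1×τ2}(x) = (form_{τ1}(x_l), form_{τ2}(x_r))`, where the fresh derived
names `x_l`, `x_r` are modeled by extending the projection path. -/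
def formVar (x : String) : Ty → List Bool → TForm Var
  | .bool, p => .base (.var (x, p))
  | .prod τ1 τ2, p =>
      .pair (formVar x τ1 (p ++ [false])) (formVar x τ2 (p ++ [true]))

/-- Pointwise iff: `φ1 ⇔Bool φ2 = (φ1 ⇔ φ2)` and
`(φ̂1, φ̂2) ⇔_{τ1×τ2} (φ̂1', φ̂2') = (φ̂1 ⇔τ1 φ̂1') ∧ (φ̂2 ⇔τ2 φ̂2')`
(any shape mismatch yields the false formula). -/
def TForm.tiff {V : Type} : TForm V → TForm V → Form V
  | .base φ, .base ψ => .iff φ ψ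
  | .pair a b, .pair c d => .and (a.tiff c) (b.tiff d)
  | _, _ => .ff

/-- A value interpreted as a (tuple of) constant Boolean formula(s) `⊤`/`⊥`. -/
def Val.toForm {V : Type} : Val → TForm V
  | .bool b => .base (if b then .tt else .ff)
  | .pair v1 v2 => .pair v1.toForm v2.toForm

/-- The component of a tuple of formulas at a given projection path. -/
def TForm.lookup {V : Type} : TForm V → List Bool → Option (Form V)
  | .base φ, [] => some φ
  | .pair a _, false :: p => a.lookup p
  | .pair _ b, true :: p => b.lookup p
  | _, _ => none

/-- Typed substitution `φ[x ↦τ φ̂]` on a single formula: every variable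
`(x, p)` derived from `x` is replaced by the component of the substituted tuple
`φ̂` at path `p`.  (Performing the sequential substitutions
`φ[x_l ↦τa φ̂a][x_r ↦τb φ̂b]` of the recursive definition amounts exactly to
this path-indexed replacement, since the derived names are fresh/distinct.) -/
def Form.tsubst (x : String) (t : TForm Var) : Form Var → Form Var
  | .tt => .tt
  | .ff => .ff
  | .var (y, p) =>
      if y = x then (t.lookup p).getD (.var (y, p)) else .var (y, p)
  | .not φ => .not (φ.tsubst x t)
  | .and φ ψ => .and (φ.tsubst x t) (ψ.tsubst x t)
  | .or φ ψ => .or (φ.tsubst x t) (ψ.tsubst x t)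
  | .iff φ ψ => .iff (φ.tsubst x t) (ψ.tsubst x t)

/-!
Typed substitution, extended componentwise to tuples, commutes with the pointwise iff,
leaves the constant tuple `v` unchanged and turns `form_τ(x)` into `v_x`.  Hence the
right-hand side is `v_x ⇔τ v`, which is equivalent to `v ⇔τ v_x`.
-/

def TForm.tsubst : TForm Var → String → TForm Var → TForm Var
  | .base φ, x, t => .base (φ.tsubst x t)
  | .pair a b, x, t => .pair (a.tsubst x t) (b.tsubst x t)

def TForm.HasSubtreeAt {V : Type} (W : TForm V) (p : List Bool) (t : TForm V) : Prop :=
  ∀ q, W.lookup (p ++ q) = t.lookup q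

namespace TForm.HasSubtreeAt

variable {V : Type} {W a b : TForm V} {p : List Bool}

theorem left (h : W.HasSubtreeAt p (.pair a b)) : W.HasSubtreeAt (p ++ [false]) a := fun q => by
  simpa [TForm.lookup] using h (false :: q)

theorem right (h : W.HasSubtreeAt p (.pair a b)) : W.HasSubtreeAt (p ++ [true]) b := fun q => by
  simpa [TForm.lookup] using h (true :: q)

theorem lookup_eq {φ : Form V} (h : W.HasSubtreeAt p (.base φ)) : W.lookup p = some φ := by
  simpa [TForm.lookup] using h []

end TForm.HasSubtreeAt

theorem TForm.tiff_tsubst (x : String) (W A B : TForm Var) :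
    (A.tiff B).tsubst x W = (A.tsubst x W).tiff (B.tsubst x W) := by
  induction A generalizing B with
  | base φ => cases B <;> rfl
  | pair a b iha ihb =>
    cases B with
    | base ψ => rfl
    | pair c d => simp only [TForm.tiff, TForm.tsubst, Form.tsubst, iha, ihb]

theorem Val.tsubst_toForm (x : String) (W : TForm Var) (v : Val) :
    v.toForm.tsubst x W = v.toForm := by
  induction v with
  | bool b => cases b <;> rfl
  | pair v1 v2 ih1 ih2 => simp only [Val.toForm, TForm.tsubst, ih1, ih2]

theorem formVar_tsubst (x : String) (W : TForm Var) (τ : Ty) (vx : Val) (hvx : vx.hasTy τ)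
    (p : List Bool) (hW : W.HasSubtreeAt p vx.toForm) :
    (formVar x τ p).tsubst x W = vx.toForm := by
  induction τ generalizing vx p with
  | bool =>
    cases vx with
    | bool b => simp [formVar, TForm.tsubst, Form.tsubst, hW.lookup_eq, Val.toForm]
    | pair => simp [Val.hasTy] at hvx
  | prod τ1 τ2 ih1 ih2 =>
    cases vx with
    | bool => simp [Val.hasTy] at hvx
    | pair w1 w2 =>
      rw [Val.hasTy, Bool.and_eq_true] at hvx
      simp only [formVar, TForm.tsubst, Val.toForm,
        ih1 w1 hvx.1 _ hW.left, ih2 w2 hvx.2 _ hW.right]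

theorem TForm.eval_tiff_comm {V : Type} (A B : TForm V) (σ : V → Bool) :
    (A.tiff B).eval σ = (B.tiff A).eval σ := by
  induction A generalizing B with
  | base φ => cases B <;> simp [TForm.tiff, Form.eval, Bool.beq_comm]
  | pair a b iha ihb => cases B <;> simp [TForm.tiff, Form.eval, iha, ihb]

theorem typed_substitution_general (τ : Ty) (v vx : Val)
    (hvx : vx.hasTy τ) (x : String) :
    ∀ σ : Var → Bool,
      (TForm.tiff v.toForm vx.toForm).eval σ
        = ((TForm.tiff (formVar x τ []) v.toForm).tsubst x vx.toForm).eval σ := by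
  intro σ
  have hform : (formVar x τ []).tsubst x vx.toForm = vx.toForm :=
    formVar_tsubst x vx.toForm τ vx hvx [] fun _ => rfl
  rw [TForm.tiff_tsubst, hform, Val.tsubst_toForm, TForm.eval_tiff_comm]

/-- **Typed Substitution Lemma.** For any Dice type `τ` and values
`v, v_x : τ`, the syntactic identity
`(v ⇔τ v_x) = (form_τ(x) ⇔τ v)[x ↦τ v_x]` holds, where equality of formulas
means semantic equivalence as Boolean functions of the remaining variables. -/
theorem typed_substitution (τ : Ty) (v vx : Val)
    (hv : v.hasTy τ) (hvx : vx.hasTy τ) (x : String) :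
    ∀ σ : Var → Bool,
      (TForm.tiff v.toForm vx.toForm).eval σ
        = ((TForm.tiff (formVar x τ []) v.toForm).tsubst x vx.toForm).eval σ :=
  typed_substitution_general τ v vx hvx x
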